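/- arXiv:2010.11178 — 4 statements merged into one kernel-verified Lean document; each statement's English description precedes it below -/
import Mathlib

section
/- Let P ⊆ ℝ^I be a polyhedron, F a face of P, and w ∈ ℝ^I a linear functional. If the face of the tangent cone cone_F(P) maximizing w is nonempty, then F is contained in the face P_w of P maximizing w, and in that case the w-maximal face of cone_F(P) equals cone_F(P_w). -/
open Set

variable {E : Type*}

/-- A polyhedron: a finite intersection of affine halfspaces. -/
def IsPolyhedron [AddCommGroup E] [Module ℝ E] (P : Set E) : Prop :=
  ∃ s : Finset ((E →ₗ[ℝ] ℝ) × ℝ), P = {x | ∀ p ∈ s, p.1 x ≤ p.2}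

/-- The face of `P` on which the linear functional `w` attains its maximum. -/
def maxFace [AddCommGroup E] [Module ℝ E] (P : Set E) (w : E →ₗ[ℝ] ℝ) : Set E :=
  {x ∈ P | ∀ y ∈ P, w y ≤ w x}

/-- `F` is a face of `P`: either `P` itself or the argmax set of a linear functional. -/
def IsFaceOf [AddCommGroup E] [Module ℝ E] (F P : Set E) : Prop :=
  F = P ∨ ∃ w : E →ₗ[ℝ] ℝ, F = maxFace P w

/-- The tangent cone of `P` at the point `f`. -/
def tconeAt [AddCommGroup E] [Module ℝ E] (P : Set E) (f : E) : Set E :=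
  {y | ∃ x : E, y = f + x ∧ ∃ ε₀ : ℝ, 0 < ε₀ ∧ ∀ ε : ℝ, 0 < ε → ε ≤ ε₀ → f + ε • x ∈ P}

/-- Prolongation beyond a relative interior point: if `f` is in the intrinsic interior of `F`
and `g ∈ F`, then `f + t • (f - g) ∈ F` for some `t > 0`. -/
lemma prolong {d : ℕ} {F : Set (EuclideanSpace ℝ (Fin d))}
    {f g : EuclideanSpace ℝ (Fin d)} (hf : f ∈ intrinsicInterior ℝ F) (hg : g ∈ F) :
    ∃ t : ℝ, 0 < t ∧ f + t • (f - g) ∈ F := by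
  rw [intrinsicInterior] at hf
  obtain ⟨f', hf'int, hf'eq⟩ := hf
  have hfS : f ∈ affineSpan ℝ F := hf'eq ▸ f'.2
  have hgS : g ∈ affineSpan ℝ F := subset_affineSpan ℝ F hg
  have hmem : ∀ t : ℝ, f + t • (f - g) ∈ affineSpan ℝ F := by
    intro t
    have := AffineSubspace.smul_vsub_vadd_mem (affineSpan ℝ F) t hfS hgS hfS
    simpa [vsub_eq_sub, vadd_eq_add, add_comm] using this
  set c : ℝ → (affineSpan ℝ F : Set (EuclideanSpace ℝ (Fin d))) :=
    fun t => ⟨f + t • (f - g), hmem t⟩ with hc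
  have hcont : Continuous c := by
    apply Continuous.subtype_mk
    continuity
  have hc0 : c 0 = f' := by
    apply Subtype.ext
    simp [hc, hf'eq]
  have hopen : IsOpen (c ⁻¹' interior ((↑) ⁻¹' F :
      Set (affineSpan ℝ F : Set (EuclideanSpace ℝ (Fin d))))) :=
    isOpen_interior.preimage hcont
  have h0 : (0 : ℝ) ∈ c ⁻¹' interior ((↑) ⁻¹' F) := by
    simp only [mem_preimage, hc0]; exact hf'int
  obtain ⟨δ, hδpos, hδ⟩ := Metric.isOpen_iff.1 hopen 0 h0
  have ht : (δ / 2 : ℝ) ∈ c ⁻¹' interior ((↑) ⁻¹' F) := by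
    apply hδ
    rw [Metric.mem_ball, Real.dist_eq, sub_zero, abs_of_pos (half_pos hδpos)]
    linarith
  refine ⟨δ / 2, half_pos hδpos, ?_⟩
  have := interior_subset ht
  simpa using this

/-- Let `P ⊆ ℝ^I` be a polyhedron, `F` a face of `P`, and `w` a linear functional.
The tangent cone of `P` along `F` is the tangent cone at any relative interior point `f` of
`F`.  If the `w`-maximal face of this tangent cone is nonempty, then `F ⊆ P_w` and the
`w`-maximal face of `cone_F(P)` equals `cone_F(P_w)`. -/
theorem stmt1 {d : ℕ} (P : Set (EuclideanSpace ℝ (Fin d))) (hP : IsPolyhedron P)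
    (F : Set (EuclideanSpace ℝ (Fin d))) (hF : IsFaceOf F P)
    (w : EuclideanSpace ℝ (Fin d) →ₗ[ℝ] ℝ)
    (f : EuclideanSpace ℝ (Fin d)) (hf : f ∈ intrinsicInterior ℝ F)
    (hne : (maxFace (tconeAt P f) w).Nonempty) :
    F ⊆ maxFace P w ∧ maxFace (tconeAt P f) w = tconeAt (maxFace P w) f := by
  obtain ⟨s, hs⟩ := hP
  have hfF : f ∈ F := intrinsicInterior_subset hf
  have hFP : F ⊆ P := by
    rcases hF with rfl | ⟨w', rfl⟩
    · exact subset_rfl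
    · exact fun x hx => hx.1
  have hfP : f ∈ P := hFP hfF
  -- f is in the tangent cone
  have hfC : f ∈ tconeAt P f :=
    ⟨0, by simp, 1, one_pos, fun ε _ _ => by simpa using hfP⟩
  obtain ⟨m, ⟨xm, hmeq, ε₀, hε₀, hmmem⟩, hmax⟩ := hne
  -- doubling the direction stays in the cone
  have h2 : f + (2 : ℝ) • xm ∈ tconeAt P f := by
    refine ⟨(2 : ℝ) • xm, rfl, ε₀ / 2, half_pos hε₀, fun ε hε hε' => ?_⟩
    have := hmmem (2 * ε) (by linarith) (by linarith)
    simpa [smul_smul, mul_comm] using this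
  have hwxm : w xm = 0 := by
    have hle : w f ≤ w m := hmax f hfC
    have hle2 : w (f + (2 : ℝ) • xm) ≤ w m := hmax _ h2
    rw [hmeq] at hle hle2
    simp only [map_add, map_smul, smul_eq_mul] at hle hle2
    linarith
  have hwm : w m = w f := by rw [hmeq]; simp [hwxm]
  -- every point of P lies in the tangent cone (convexity)
  have hPC : P ⊆ tconeAt P f := by
    intro y hy
    refine ⟨y - f, by abel, 1, one_pos, fun ε hε hε1 => ?_⟩
    rw [hs] at hfP hy ⊢
    intro p hp
    have h1 := hfP p hp
    have h2 := hy p hp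
    have : p.1 (f + ε • (y - f)) = (1 - ε) * p.1 f + ε * p.1 y := by
      simp only [map_add, map_smul, map_sub, smul_eq_mul]; ring
    rw [this]
    nlinarith
  -- max value of w on P is w f
  have hwP : ∀ y ∈ P, w y ≤ w f := fun y hy => (hmax y (hPC hy)).trans hwm.le
  -- Goal 1
  have goal1 : F ⊆ maxFace P w := by
    intro g hg
    obtain ⟨t, ht, htm⟩ := prolong hf hg
    have hle : w (f + t • (f - g)) ≤ w f := hwP _ (hFP htm)
    have hgf : w f ≤ w g := by
      simp only [map_add, map_smul, map_sub, smul_eq_mul] at hle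
      nlinarith
    exact ⟨hFP hg, fun y hy => (hwP y hy).trans hgf⟩
  refine ⟨goal1, ?_⟩
  have hfMax : f ∈ maxFace P w := goal1 hfF
  -- all points of maxFace P w have value w f
  have hval : ∀ y ∈ maxFace P w, w y = w f :=
    fun y hy => le_antisymm (hwP y hy.1) (hy.2 f hfP)
  ext y
  constructor
  · rintro ⟨⟨x, rfl, ε₁, hε₁, hxm⟩, hymax⟩
    have hwx : w x = 0 := by
      have h1 : w f ≤ w (f + x) := hymax f hfC
      have h2 : w (f + x) ≤ w m := hmax _ ⟨x, rfl, ε₁, hε₁, hxm⟩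
      rw [hwm] at h2
      simp only [map_add] at h1 h2
      linarith
    refine ⟨x, rfl, ε₁, hε₁, fun ε hε hε' => ?_⟩
    refine ⟨hxm ε hε hε', fun z hz => ?_⟩
    have : w (f + ε • x) = w f := by
      simp [map_add, map_smul, hwx]
    rw [this]
    exact hwP z hz
  · rintro ⟨x, rfl, ε₁, hε₁, hxm⟩
    have hxC : f + x ∈ tconeAt P f :=
      ⟨x, rfl, ε₁, hε₁, fun ε hε hε' => (hxm ε hε hε').1⟩
    have hwx : w x = 0 := by
      have := hval _ (hxm ε₁ hε₁ le_rfl)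
      simp only [map_add, map_smul, smul_eq_mul] at this
      nlinarith
    refine ⟨hxC, fun z hz => ?_⟩
    have : w (f + x) = w f := by simp [map_add, hwx]
    rw [this]
    exact (hmax z hz).trans hwm.le
end

section
/- Let q be a preposet (reflexive transitive relation) on a finite set I, and let S ⊆ I be a downset (lower ideal) of q. Then every prelinear extension l of q with S a downset of l is the ordinal sum of a prelinear extension of q restricted to S and a prelinear extension of q restricted to I \ S, and conversely every such ordinal sum is a prelinear extension of q. -/
/-- A preposet: a reflexive and transitive relation. -/
def IsPreposet {α : Type*} (r : α → α → Prop) : Prop :=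
  (∀ x, r x x) ∧ ∀ x y z, r x y → r y z → r x z

/-- A prelinear (totally ordered) preposet: every two elements are comparable. -/
def IsPrelinear {α : Type*} (r : α → α → Prop) : Prop :=
  IsPreposet r ∧ ∀ x y, r x y ∨ r y x

/-- The restriction of a relation to a subset. -/
def restrictRel {α : Type*} (r : α → α → Prop) (S : Set α) : S → S → Prop :=
  fun x y => r x y

/-- `l` is a prelinear extension of `q`: `l` is a totally ordered preposet and
`x < y` in `q` implies `x < y` in `l`. -/
def IsPrelinExt {α : Type*} (q l : α → α → Prop) : Prop :=
  IsPrelinear l ∧ ∀ x y, q x y → ¬ q y x → l x y ∧ ¬ l y x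

/-- `S` is a downset (lower ideal) of `q`. -/
def IsDownsetRel {α : Type*} (S : Set α) (q : α → α → Prop) : Prop :=
  ∀ x y, q x y → y ∈ S → x ∈ S

/-- The ordinal sum of (the restriction to `S` of) `p` and (the restriction to `Sᶜ` of) `r`:
every element of `S` is below every element of `Sᶜ`, and internal relations are kept. -/
def ordinalSum {α : Type*} (S : Set α) (p r : α → α → Prop) : α → α → Prop :=
  fun x y => (x ∈ S ∧ y ∉ S) ∨ (x ∈ S ∧ y ∈ S ∧ p x y) ∨ (x ∉ S ∧ y ∉ S ∧ r x y)

/-- Let `q` be a preposet on a finite set `I` and `S` a downset of `q`.  Then every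
prelinear extension `l` of `q` with `S` a downset of `l` is the ordinal sum of a prelinear
extension of `q|_S` and a prelinear extension of `q|_{I \ S}`; conversely every such
ordinal sum is a prelinear extension of `q`. -/
theorem stmt7 {I : Type*} [Fintype I] (q : I → I → Prop) (hq : IsPreposet q)
    (S : Set I) (hS : IsDownsetRel S q) :
    (∀ l : I → I → Prop, IsPrelinExt q l → IsDownsetRel S l →
      l = ordinalSum S l l ∧
      IsPrelinExt (restrictRel q S) (restrictRel l S) ∧
      IsPrelinExt (restrictRel q Sᶜ) (restrictRel l Sᶜ)) ∧
    (∀ p r : I → I → Prop,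
      IsPrelinExt (restrictRel q S) (restrictRel p S) →
      IsPrelinExt (restrictRel q Sᶜ) (restrictRel r Sᶜ) →
      IsPrelinExt q (ordinalSum S p r)) := by

  constructor
  · intro l hl hSl
    obtain ⟨⟨⟨lrefl, ltrans⟩, ltot⟩, lext⟩ := hl
    have key : ∀ x y : I, x ∈ S → y ∉ S → l x y := by
      intro x y hx hy
      rcases ltot x y with h | h
      · exact h
      · exact absurd (hSl y x h hx) hy
    refine ⟨?_, ?_, ?_⟩
    · funext x y
      apply propext
      constructor
      · intro h
        by_cases hx : x ∈ S <;> by_cases hy : y ∈ S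
        · exact Or.inr (Or.inl ⟨hx, hy, h⟩)
        · exact Or.inl ⟨hx, hy⟩
        · exact absurd (hSl x y h hy) hx
        · exact Or.inr (Or.inr ⟨hx, hy, h⟩)
      · rintro (⟨hx, hy⟩ | ⟨_, _, h⟩ | ⟨_, _, h⟩)
        · exact key x y hx hy
        · exact h
        · exact h
    · exact ⟨⟨⟨fun x => lrefl x, fun x y z => ltrans x y z⟩, fun x y => ltot x y⟩,
        fun x y hxy hyx => lext x y hxy hyx⟩
    · exact ⟨⟨⟨fun x => lrefl x, fun x y z => ltrans x y z⟩, fun x y => ltot x y⟩,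
        fun x y hxy hyx => lext x y hxy hyx⟩
  · intro p r hp hr
    obtain ⟨⟨⟨prefl, ptrans⟩, ptot⟩, pext⟩ := hp
    obtain ⟨⟨⟨rrefl, rtrans⟩, rtot⟩, rext⟩ := hr
    refine ⟨⟨⟨?_, ?_⟩, ?_⟩, ?_⟩
    · intro x
      by_cases hx : x ∈ S
      · exact Or.inr (Or.inl ⟨hx, hx, prefl ⟨x, hx⟩⟩)
      · exact Or.inr (Or.inr ⟨hx, hx, rrefl ⟨x, hx⟩⟩)
    · rintro x y z (⟨hx, hy⟩ | ⟨hx, hy, hxy⟩ | ⟨hx, hy, hxy⟩)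
        (⟨hy', hz⟩ | ⟨hy', hz, hyz⟩ | ⟨hy', hz, hyz⟩)
      · exact absurd hy' hy
      · exact absurd hy' hy
      · exact Or.inl ⟨hx, hz⟩
      · exact Or.inl ⟨hx, hz⟩
      · exact Or.inr (Or.inl ⟨hx, hz, ptrans ⟨x, hx⟩ ⟨y, hy⟩ ⟨z, hz⟩ hxy hyz⟩)
      · exact absurd hy hy'
      · exact absurd hy' hy
      · exact absurd hy' hy
      · exact Or.inr (Or.inr ⟨hx, hz, rtrans ⟨x, hx⟩ ⟨y, hy⟩ ⟨z, hz⟩ hxy hyz⟩)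
    · intro x y
      by_cases hx : x ∈ S <;> by_cases hy : y ∈ S
      · rcases ptot ⟨x, hx⟩ ⟨y, hy⟩ with h | h
        · exact Or.inl (Or.inr (Or.inl ⟨hx, hy, h⟩))
        · exact Or.inr (Or.inr (Or.inl ⟨hy, hx, h⟩))
      · exact Or.inl (Or.inl ⟨hx, hy⟩)
      · exact Or.inr (Or.inl ⟨hy, hx⟩)
      · rcases rtot ⟨x, hx⟩ ⟨y, hy⟩ with h | h
        · exact Or.inl (Or.inr (Or.inr ⟨hx, hy, h⟩))
        · exact Or.inr (Or.inr (Or.inr ⟨hy, hx, h⟩))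
    · intro x y hxy hyx
      by_cases hx : x ∈ S <;> by_cases hy : y ∈ S
      · obtain ⟨h1, h2⟩ := pext ⟨x, hx⟩ ⟨y, hy⟩ hxy hyx
        refine ⟨Or.inr (Or.inl ⟨hx, hy, h1⟩), ?_⟩
        rintro (⟨_, hx'⟩ | ⟨_, _, h⟩ | ⟨hy', _⟩)
        · exact hx' hx
        · exact h2 h
        · exact hy' hy
      · refine ⟨Or.inl ⟨hx, hy⟩, ?_⟩
        rintro (⟨hy', _⟩ | ⟨hy', _⟩ | ⟨_, hx', _⟩)
        · exact hy hy'
        · exact hy hy'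
        · exact hx' hx
      · exact absurd (hS x y hxy hy) hx
      · obtain ⟨h1, h2⟩ := rext ⟨x, hx⟩ ⟨y, hy⟩ hxy hyx
        refine ⟨Or.inr (Or.inr ⟨hx, hy, h1⟩), ?_⟩
        rintro (⟨hy', _⟩ | ⟨hy', _⟩ | ⟨_, _, h⟩)
        · exact hy hy'
        · exact hy hy'
        · exact h2 h
end

section
/- Quasi-shuffles satisfy the compatibility (Hopf) axiom at the level of sets: let F be an ordered set partition of S, G of T, with I = S ⊔ T, and let I = T₁ ⊔ T₂. If H is a quasi-shuffle of F and G and H = H'·H'' splits as a concatenation with H' an ordered set partition of T₁ and H'' of T₂, then H' is a quasi-shuffle of F|_{S∩T₁} and G|_{T∩T₁}, and H'' is a quasi-shuffle of F|_{S∩T₂} and G|_{T∩T₂}, and moreover F must split compatibly: S ∩ T₁ is a union of an initial segment of blocks of F. -/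
variable {I : Type*}

/-- An ordered set partition of the finite set `G`. -/
def IsOSP [DecidableEq I] (L : List (Finset I)) (G : Finset I) : Prop :=
  (∀ S ∈ L, S.Nonempty) ∧ L.Pairwise Disjoint ∧ L.foldr (· ∪ ·) ∅ = G

/-- The restriction `F|_S`: intersect each block with `S` and delete empty blocks. -/
def restrictOSP [DecidableEq I] (L : List (Finset I)) (S : Finset I) : List (Finset I) :=
  (L.map (· ∩ S)).filter fun A => A.Nonempty

lemma restrict_append [DecidableEq I] (l₁ l₂ : List (Finset I)) (X : Finset I) :
    restrictOSP (l₁ ++ l₂) X = restrictOSP l₁ X ++ restrictOSP l₂ X := by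
  simp [restrictOSP, List.filter_append]

lemma restrict_restrict [DecidableEq I] (L : List (Finset I)) (S X : Finset I) :
    restrictOSP (restrictOSP L S) X = restrictOSP L (S ∩ X) := by
  induction L with
  | nil => simp [restrictOSP]
  | cons A L ih =>
    by_cases h1 : (A ∩ S).Nonempty
    · by_cases h2 : (A ∩ (S ∩ X)).Nonempty
      · have h2' : (A ∩ S ∩ X).Nonempty := by rwa [Finset.inter_assoc]
        simp only [restrictOSP, List.map_cons, List.filter_cons, h1, h2, h2', decide_eq_true_eq,
          if_true, if_false, Finset.inter_assoc] at *
        simp [h1, h2, ih]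
      · have h2' : ¬ (A ∩ S ∩ X).Nonempty := by rwa [Finset.inter_assoc]
        simp only [restrictOSP, List.map_cons, List.filter_cons, Finset.inter_assoc] at *
        simp [h1, h2, ih]
    · have h2 : ¬ (A ∩ (S ∩ X)).Nonempty := by
        intro h; exact h1 (h.mono (by rw [← Finset.inter_assoc]; exact Finset.inter_subset_left))
      simp only [restrictOSP, List.map_cons, List.filter_cons] at *
      simp [h1, h2, ih]

lemma restrict_nil_of_disjoint [DecidableEq I] (L : List (Finset I)) (X : Finset I)
    (h : ∀ A ∈ L, A ∩ X = ∅) : restrictOSP L X = [] := by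
  induction L with
  | nil => simp [restrictOSP]
  | cons A L ih =>
    simp only [restrictOSP, List.map_cons, List.filter_cons] at *
    rw [h A (by simp)]
    simpa using ih (fun A hA => h A (by simp [hA]))

lemma mem_subset_foldr [DecidableEq I] {L : List (Finset I)} {A : Finset I} (h : A ∈ L) :
    A ⊆ L.foldr (· ∪ ·) ∅ := by
  induction L with
  | nil => simp at h
  | cons B L ih =>
    rcases List.mem_cons.mp h with rfl | h
    · exact Finset.subset_union_left
    · exact (ih h).trans Finset.subset_union_right

lemma foldr_restrict [DecidableEq I] (L : List (Finset I)) (X : Finset I) :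
    (restrictOSP L X).foldr (· ∪ ·) ∅ = L.foldr (· ∪ ·) ∅ ∩ X := by
  induction L with
  | nil => simp [restrictOSP]
  | cons A L ih =>
    simp only [restrictOSP, List.map_cons, List.filter_cons, List.foldr_cons] at *
    by_cases h : (A ∩ X).Nonempty
    · simp [h, ih, Finset.union_inter_distrib_right]
    · have : A ∩ X = ∅ := Finset.not_nonempty_iff_eq_empty.mp h
      simp [h, ih, Finset.union_inter_distrib_right, this]

/-- Quasi-shuffles satisfy the Hopf compatibility axiom at the level of sets: let
`I = S ⊔ T = T₁ ⊔ T₂`, let `H` be a quasi-shuffle of `F` (on `S`) and `G` (on `T`)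
(i.e. `H|_S = F` and `H|_T = G`), and suppose `H = H' ++ H''` with `H'` an ordered set
partition of `T₁` and `H''` of `T₂`.  Then `H'` is a quasi-shuffle of `F|_{S∩T₁}` and
`G|_{T∩T₁}`, `H''` is a quasi-shuffle of `F|_{S∩T₂}` and `G|_{T∩T₂}`, and `S ∩ T₁` is the
union of an initial segment of blocks of `F`. -/
theorem stmt15 [DecidableEq I] [Fintype I]
    (S T T₁ T₂ : Finset I) (hST : Disjoint S T) (hSTu : S ∪ T = Finset.univ)
    (hT12 : Disjoint T₁ T₂) (hT12u : T₁ ∪ T₂ = Finset.univ)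
    (F G H H' H'' : List (Finset I))
    (hF : IsOSP F S) (hG : IsOSP G T) (hH : IsOSP H Finset.univ)
    (hH' : IsOSP H' T₁) (hH'' : IsOSP H'' T₂)
    (hqs1 : restrictOSP H S = F) (hqs2 : restrictOSP H T = G)
    (hsplit : H = H' ++ H'') :
    restrictOSP H' (S ∩ T₁) = restrictOSP F (S ∩ T₁) ∧
    restrictOSP H' (T ∩ T₁) = restrictOSP G (T ∩ T₁) ∧
    restrictOSP H'' (S ∩ T₂) = restrictOSP F (S ∩ T₂) ∧
    restrictOSP H'' (T ∩ T₂) = restrictOSP G (T ∩ T₂) ∧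
    ∃ j : ℕ, (F.take j).foldr (· ∪ ·) ∅ = S ∩ T₁ := by
  have hH'sub : ∀ A ∈ H', A ⊆ T₁ := fun A hA => hH'.2.2 ▸ mem_subset_foldr hA
  have hH''sub : ∀ A ∈ H'', A ⊆ T₂ := fun A hA => hH''.2.2 ▸ mem_subset_foldr hA
  have key1 : ∀ X : Finset I, X ⊆ T₁ → restrictOSP H' X = restrictOSP H X := by
    intro X hX
    rw [hsplit, restrict_append, restrict_nil_of_disjoint H'' X (fun A hA =>
      Finset.disjoint_iff_inter_eq_empty.mp
        ((hT12.symm.mono (hH''sub A hA) hX))), List.append_nil]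
  have key2 : ∀ X : Finset I, X ⊆ T₂ → restrictOSP H'' X = restrictOSP H X := by
    intro X hX
    rw [hsplit, restrict_append, restrict_nil_of_disjoint H' X (fun A hA =>
      Finset.disjoint_iff_inter_eq_empty.mp
        ((hT12.mono (hH'sub A hA) hX))), List.nil_append]
  have iSS : ∀ X : Finset I, S ∩ (S ∩ X) = S ∩ X := fun X => by
    rw [← Finset.inter_assoc, Finset.inter_self]
  have iTT : ∀ X : Finset I, T ∩ (T ∩ X) = T ∩ X := fun X => by
    rw [← Finset.inter_assoc, Finset.inter_self]
  have e1 : restrictOSP H' (S ∩ T₁) = restrictOSP F (S ∩ T₁) := by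
    rw [key1 _ Finset.inter_subset_right, ← hqs1, restrict_restrict, iSS]
  have e2 : restrictOSP H' (T ∩ T₁) = restrictOSP G (T ∩ T₁) := by
    rw [key1 _ Finset.inter_subset_right, ← hqs2, restrict_restrict, iTT]
  have e3 : restrictOSP H'' (S ∩ T₂) = restrictOSP F (S ∩ T₂) := by
    rw [key2 _ Finset.inter_subset_right, ← hqs1, restrict_restrict, iSS]
  have e4 : restrictOSP H'' (T ∩ T₂) = restrictOSP G (T ∩ T₂) := by
    rw [key2 _ Finset.inter_subset_right, ← hqs2, restrict_restrict, iTT]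
  refine ⟨e1, e2, e3, e4, (restrictOSP H' S).length, ?_⟩
  have hFsplit : F = restrictOSP H' S ++ restrictOSP H'' S := by
    rw [← hqs1, hsplit, restrict_append]
  rw [hFsplit, List.take_left, foldr_restrict, hH'.2.2, Finset.inter_comm]
end

section
/- Every weighted ordered set partition cone is determined by its data: if (w,F) and (v,G) are weighted ordered set partitions of I and the translated cones cone(w,F) = w^F + cone(F) and cone(v,G) = v^G + cone(G) are equal as subsets of ℝ^I, then F = G and w = v. -/
variable {I : Type*}

/-- The generators `e_i − e_j` with `i ∈ F_a`, `j ∈ F_b`, `a ≥ b`, of the cone of an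
ordered set partition `F = F₁|⋯|F_k`. -/
def ospGens [DecidableEq I] (L : List (Finset I)) : Set (I → ℝ) :=
  {v | ∃ a b : Fin L.length, b ≤ a ∧ ∃ i ∈ L.get a, ∃ j ∈ L.get b,
        v = Pi.single i (1 : ℝ) - Pi.single j 1}

/-- The cone of an ordered set partition: all nonnegative combinations of the generators. -/
def ospCone [DecidableEq I] [Fintype I] (L : List (Finset I)) : Set (I → ℝ) :=
  {x | ∃ (n : ℕ) (c : Fin n → ℝ) (g : Fin n → (I → ℝ)),
        (∀ t, 0 ≤ c t) ∧ (∀ t, g t ∈ ospGens L) ∧ x = ∑ t, c t • g t}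

/-- The translated cone `cone(w,F) = w^F + cone(F)`, where `w^F` is any vector whose
block sums are the weights `w(F_a)` (the `a`-th entry of the weight list). -/
def wospCone [DecidableEq I] [Fintype I] (L : List (Finset I)) (ws : List ℝ) :
    Set (I → ℝ) :=
  {x | ∃ v : I → ℝ, (∀ a : Fin L.length, ∑ i ∈ L.get a, v i = ws.getD a 0) ∧
        x - v ∈ ospCone L}

/-! For `A ⊆ I`, the functional `x ↦ ∑_{i ∈ A} x_i` is bounded above on `cone(w,F)` exactly when
`A` is an initial union `F₁ ∪ ⋯ ∪ F_m`, and its maximum there is `w(F₁) + ⋯ + w(F_m)`: no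
generator `e_i - e_j` increases such a sum, while for any other `A` some generator increases it by
`1`. Hence the cone determines the chain of initial unions, in which the block of `i` is recorded
by how many of them miss `i`, and the partial sums of the weights. -/

open Finset

section

variable {F : List (Finset I)}

theorem List.Pairwise.disjoint_get (hF : F.Pairwise _root_.Disjoint)
    {a b : Fin F.length} (hab : a ≠ b) : _root_.Disjoint (F.get a) (F.get b) := by
  rcases lt_or_gt_of_ne hab with h | h
  · exact List.pairwise_iff_get.mp hF a b h
  · exact (List.pairwise_iff_get.mp hF b a h).symm

theorem List.Pairwise.eq_of_mem_get (hF : F.Pairwise _root_.Disjoint)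
    {a b : Fin F.length} {i : I} (ha : i ∈ F.get a) (hb : i ∈ F.get b) : a = b := by
  by_contra hab
  exact Finset.disjoint_left.mp (hF.disjoint_get hab) ha hb

def prefixWeight (F : List (Finset I)) (u : List ℝ) (m : ℕ) : ℝ :=
  ∑ a ∈ univ.filter (fun a : Fin F.length => (a : ℕ) < m), u.getD a 0

theorem prefixWeight_succ (u : List ℝ) (a : Fin F.length) :
    prefixWeight F u (a + 1) = prefixWeight F u a + u.getD a 0 := by
  have : univ.filter (fun b : Fin F.length => (b : ℕ) < a + 1) =
      insert a (univ.filter fun b : Fin F.length => (b : ℕ) < a) := by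
    ext b
    simp only [mem_filter, mem_univ, true_and, mem_insert, Fin.ext_iff]
    omega
  rw [prefixWeight, this, sum_insert (by simp), add_comm]
  rfl

theorem eq_of_prefixWeight_eq {u v : List ℝ}
    (hu : u.length = F.length) (hv : v.length = F.length)
    (h : ∀ m, prefixWeight F u m = prefixWeight F v m) : u = v := by
  refine List.ext_getElem (hu.trans hv.symm) fun n hnu hnv => ?_
  have hsucc := h (n + 1)
  rw [prefixWeight_succ u ⟨n, hu ▸ hnu⟩, prefixWeight_succ v ⟨n, hu ▸ hnu⟩, h n] at hsucc
  simpa [List.getElem?_eq_getElem hnu, List.getElem?_eq_getElem hnv] using hsucc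

variable [DecidableEq I]

theorem mem_foldr_union {L : List (Finset I)} {i : I} :
    i ∈ L.foldr (· ∪ ·) ∅ ↔ ∃ S ∈ L, i ∈ S := by
  induction L with
  | nil => simp
  | cons S L ih => simp [ih]

theorem IsOSP.exists_mem_get {G : Finset I} (hF : IsOSP F G) {i : I} (hi : i ∈ G) :
    ∃ a, i ∈ F.get a := by
  rw [← hF.2.2, mem_foldr_union] at hi
  obtain ⟨S, hS, hiS⟩ := hi
  obtain ⟨a, rfl⟩ := List.mem_iff_get.mp hS
  exact ⟨a, hiS⟩

def prefixUnion (F : List (Finset I)) (m : ℕ) : Finset I :=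
  (univ.filter fun a : Fin F.length => (a : ℕ) < m).biUnion F.get

theorem mem_prefixUnion {m : ℕ} {i : I} :
    i ∈ prefixUnion F m ↔ ∃ a : Fin F.length, (a : ℕ) < m ∧ i ∈ F.get a := by
  simp [prefixUnion]

theorem mem_prefixUnion_iff_lt (hF : F.Pairwise Disjoint) {a : Fin F.length} {i : I}
    (hi : i ∈ F.get a) {m : ℕ} : i ∈ prefixUnion F m ↔ (a : ℕ) < m := by
  rw [mem_prefixUnion]
  exact ⟨fun ⟨b, hb, hib⟩ => hF.eq_of_mem_get hi hib ▸ hb, fun h => ⟨a, h, hi⟩⟩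

theorem sum_prefixUnion_nonpos_of_mem_ospGens (hF : F.Pairwise Disjoint) (m : ℕ) :
    ∀ g ∈ ospGens F, ∑ i ∈ prefixUnion F m, g i ≤ 0 := by
  rintro _ ⟨a, b, hba, i, hi, j, hj, rfl⟩
  simp only [Pi.sub_apply, sum_sub_distrib, sum_pi_single',
    mem_prefixUnion_iff_lt hF hi, mem_prefixUnion_iff_lt hF hj]
  have := Fin.le_def.mp hba
  split_ifs <;> first | (exfalso; omega) | norm_num

theorem sum_prefixUnion_of_blockSums (hF : F.Pairwise Disjoint) {u : List ℝ} {w : I → ℝ}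
    (hw : ∀ a : Fin F.length, ∑ i ∈ F.get a, w i = u.getD a 0) (m : ℕ) :
    ∑ i ∈ prefixUnion F m, w i = prefixWeight F u m := by
  rw [prefixUnion, sum_biUnion]
  · exact sum_congr rfl fun a _ => hw a
  · exact fun a _ b _ hab => hF.disjoint_get hab

variable [Fintype I]

theorem prefixUnion_strictMonoOn (hF : IsOSP F univ) :
    StrictMonoOn (prefixUnion F) (Set.Iic F.length) := by
  intro m _ m' hm' hlt
  have hsub : prefixUnion F m ⊆ prefixUnion F m' := fun i hi =>
    let ⟨b, hb, hib⟩ := mem_prefixUnion.mp hi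
    mem_prefixUnion.mpr ⟨b, hb.trans hlt, hib⟩
  obtain ⟨i, hi⟩ := hF.1 _ (F.get_mem ⟨m, hlt.trans_le hm'⟩)
  refine (ssubset_iff_of_subset hsub).mpr ⟨i, ?_, ?_⟩
  · exact (mem_prefixUnion_iff_lt hF.2.1 hi).mpr hlt
  · exact fun h => lt_irrefl m ((mem_prefixUnion_iff_lt hF.2.1 hi).mp h)

theorem zero_mem_ospCone : (0 : I → ℝ) ∈ ospCone F :=
  ⟨0, Fin.elim0, Fin.elim0, fun t => t.elim0, fun t => t.elim0, by simp⟩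

theorem smul_mem_ospCone {t : ℝ} (ht : 0 ≤ t) {g : I → ℝ} (hg : g ∈ ospGens F) :
    t • g ∈ ospCone F :=
  ⟨1, fun _ => t, fun _ => g, fun _ => ht, fun _ => hg, by simp⟩

theorem sum_nonpos_of_mem_ospCone {A : Finset I}
    (hA : ∀ g ∈ ospGens F, ∑ i ∈ A, g i ≤ 0) {x : I → ℝ} (hx : x ∈ ospCone F) :
    ∑ i ∈ A, x i ≤ 0 := by
  obtain ⟨n, c, g, hc, hg, rfl⟩ := hx
  simp only [Finset.sum_apply, Pi.smul_apply, smul_eq_mul]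
  rw [sum_comm]
  exact sum_nonpos fun t _ => by
    rw [← mul_sum]
    exact mul_nonpos_of_nonneg_of_nonpos (hc t) (hA _ (hg t))

theorem add_mem_wospCone {u : List ℝ} {w : I → ℝ}
    (hw : ∀ a : Fin F.length, ∑ i ∈ F.get a, w i = u.getD a 0) {y : I → ℝ}
    (hy : y ∈ ospCone F) : w + y ∈ wospCone F u :=
  ⟨w, hw, by simpa using hy⟩

theorem exists_blockSums (hF : IsOSP F univ) (u : List ℝ) :
    ∃ w : I → ℝ, ∀ a : Fin F.length, ∑ i ∈ F.get a, w i = u.getD a 0 := by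
  choose r hr using fun a : Fin F.length => hF.1 _ (F.get_mem a)
  have hr_mem : ∀ a b, r a ∈ F.get b ↔ a = b := fun a b =>
    ⟨hF.2.1.eq_of_mem_get (hr a), fun h => h ▸ hr a⟩
  refine ⟨∑ a, Pi.single (r a) (u.getD a 0), fun b => ?_⟩
  simp only [Finset.sum_apply]
  rw [sum_comm]
  simp only [sum_pi_single', hr_mem, sum_ite_eq', mem_univ, if_true]

theorem isGreatest_sum_prefixUnion (hF : IsOSP F univ) (u : List ℝ) (m : ℕ) :
    IsGreatest ((fun x => ∑ i ∈ prefixUnion F m, x i) '' wospCone F u) (prefixWeight F u m) := by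
  obtain ⟨w, hw⟩ := exists_blockSums hF u
  refine ⟨⟨w, by simpa using add_mem_wospCone hw zero_mem_ospCone,
    sum_prefixUnion_of_blockSums hF.2.1 hw m⟩, ?_⟩
  rintro _ ⟨x, ⟨v, hv, hxv⟩, rfl⟩
  have := sum_nonpos_of_mem_ospCone (sum_prefixUnion_nonpos_of_mem_ospGens hF.2.1 m) hxv
  simp only [Pi.sub_apply, sum_sub_distrib, sum_prefixUnion_of_blockSums hF.2.1 hv] at this
  exact sub_nonpos.mp this

theorem exists_straddling_blocks (hF : IsOSP F univ) {A : Finset I}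
    (hA : ∀ m ≤ F.length, A ≠ prefixUnion F m) :
    ∃ a b : Fin F.length, b ≤ a ∧ ∃ i ∈ F.get a, ∃ j ∈ F.get b, i ∈ A ∧ j ∉ A := by
  by_contra! hclosed
  -- `hclosed` says that `A` contains every block below a block it meets, so `A` is the union of
  -- the blocks below `m`, one past the last block meeting `A`.
  let m := (univ.filter fun a : Fin F.length => ∃ i ∈ F.get a, i ∈ A).sup fun a => (a : ℕ) + 1
  refine hA m (Finset.sup_le fun a _ => a.isLt) (Finset.ext fun i => ⟨fun hi => ?_, fun hi => ?_⟩)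
  · obtain ⟨a, ha⟩ := hF.exists_mem_get (mem_univ i)
    refine mem_prefixUnion.mpr ⟨a, Nat.lt_of_succ_le ?_, ha⟩
    exact le_sup (f := fun a : Fin F.length => (a : ℕ) + 1) (by simpa using ⟨i, ha, hi⟩)
  · obtain ⟨b, hbm, hb⟩ := mem_prefixUnion.mp hi
    obtain ⟨a, ha, hba⟩ := Finset.lt_sup_iff.mp hbm
    obtain ⟨i', hi'a, hi'A⟩ := (mem_filter.mp ha).2
    exact hclosed a b (Fin.le_def.mpr (Nat.lt_succ_iff.mp hba)) i' hi'a i hb hi'A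

theorem not_bddAbove_sum_of_ne_prefixUnion (hF : IsOSP F univ) (u : List ℝ) {A : Finset I}
    (hA : ∀ m ≤ F.length, A ≠ prefixUnion F m) :
    ¬ BddAbove ((fun x => ∑ i ∈ A, x i) '' wospCone F u) := by
  obtain ⟨a, b, hba, i, hi, j, hj, hiA, hjA⟩ := exists_straddling_blocks hF hA
  have hg : Pi.single i 1 - Pi.single j 1 ∈ ospGens F := ⟨a, b, hba, i, hi, j, hj, rfl⟩
  obtain ⟨w, hw⟩ := exists_blockSums hF u
  rw [not_bddAbove_iff]
  intro M
  set t := |M - ∑ k ∈ A, w k| + 1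
  refine ⟨_, ⟨w + t • (Pi.single i 1 - Pi.single j 1),
    add_mem_wospCone hw (smul_mem_ospCone (by positivity) hg), rfl⟩, ?_⟩
  simp only [Pi.add_apply, Pi.smul_apply, Pi.sub_apply, smul_eq_mul, sum_add_distrib, ← mul_sum,
    sum_sub_distrib, sum_pi_single', hiA, hjA, if_true, if_false]
  linarith [le_abs_self (M - ∑ k ∈ A, w k)]

theorem bddAbove_sum_wospCone_iff (hF : IsOSP F univ) (u : List ℝ) (A : Finset I) :
    BddAbove ((fun x => ∑ i ∈ A, x i) '' wospCone F u) ↔ ∃ m ≤ F.length, prefixUnion F m = A := by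
  refine ⟨fun h => ?_, fun ⟨m, _, hm⟩ => hm ▸ (isGreatest_sum_prefixUnion hF u m).bddAbove⟩
  by_contra! hA
  exact not_bddAbove_sum_of_ne_prefixUnion hF u (fun m hm => (hA m hm).symm) h

open Classical in
noncomputable def sumBoundedSets (C : Set (I → ℝ)) : Finset (Finset I) :=
  univ.filter fun A => BddAbove ((fun x => ∑ i ∈ A, x i) '' C)

theorem sumBoundedSets_wospCone (hF : IsOSP F univ) (u : List ℝ) :
    sumBoundedSets (wospCone F u) = (range (F.length + 1)).image (prefixUnion F) := by
  ext A
  simp only [sumBoundedSets, mem_filter, mem_univ, true_and, bddAbove_sum_wospCone_iff hF,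
    mem_image, mem_range, Nat.lt_succ_iff]

theorem card_sumBoundedSets_wospCone (hF : IsOSP F univ) (u : List ℝ) :
    #(sumBoundedSets (wospCone F u)) = F.length + 1 := by
  rw [sumBoundedSets_wospCone hF, card_image_of_injOn, card_range]
  exact (prefixUnion_strictMonoOn hF).injOn.mono fun m hm => by simpa [Nat.lt_succ_iff] using hm

theorem card_sumBoundedSets_not_mem (hF : IsOSP F univ) (u : List ℝ) {a : Fin F.length} {i : I}
    (hi : i ∈ F.get a) : #((sumBoundedSets (wospCone F u)).filter (i ∉ ·)) = a + 1 := by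
  have hfilter : (range (F.length + 1)).filter (fun m => i ∉ prefixUnion F m) = range (a + 1) := by
    ext m
    simp only [mem_filter, mem_range, mem_prefixUnion_iff_lt hF.2.1 hi]
    omega
  rw [sumBoundedSets_wospCone hF, filter_image, hfilter, card_image_of_injOn, card_range]
  exact (prefixUnion_strictMonoOn hF).injOn.mono fun m hm => by
    simp only [coe_range, Set.mem_Iio] at hm
    exact Set.mem_Iic.mpr (by omega)

theorem mem_get_iff_card_sumBoundedSets (hF : IsOSP F univ) (u : List ℝ) (a : Fin F.length)
    (i : I) : i ∈ F.get a ↔ #((sumBoundedSets (wospCone F u)).filter (i ∉ ·)) = a + 1 := by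
  refine ⟨card_sumBoundedSets_not_mem hF u, fun h => ?_⟩
  obtain ⟨b, hb⟩ := hF.exists_mem_get (mem_univ i)
  rw [card_sumBoundedSets_not_mem hF u hb, Nat.add_right_cancel_iff, Fin.val_inj] at h
  exact h ▸ hb

end

/-- A weighted ordered set partition cone determines its data: if `(u,F)` and `(v,G)` are
weighted ordered set partitions of `I` whose translated cones agree as subsets of `ℝ^I`,
then `F = G` and `u = v`. -/
theorem stmt19 [Fintype I] [DecidableEq I]
    (F G : List (Finset I)) (u v : List ℝ)
    (hF : IsOSP F Finset.univ) (hG : IsOSP G Finset.univ)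
    (hu : u.length = F.length) (hv : v.length = G.length)
    (h : wospCone F u = wospCone G v) :
    F = G ∧ u = v := by
  have hlen : F.length = G.length := by
    have := card_sumBoundedSets_wospCone hF u
    rw [h, card_sumBoundedSets_wospCone hG v] at this
    omega
  have hFG : F = G := by
    refine List.ext_get hlen fun n hnF hnG => Finset.ext fun i => ?_
    rw [mem_get_iff_card_sumBoundedSets hF u ⟨n, hnF⟩,
      mem_get_iff_card_sumBoundedSets hG v ⟨n, hnG⟩, h]
  subst hFG
  refine ⟨rfl, eq_of_prefixWeight_eq hu hv fun m => ?_⟩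
  exact (isGreatest_sum_prefixUnion hF u m).unique (h ▸ isGreatest_sum_prefixUnion hF v m)
end
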